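/- arXiv:1606.03029 — 4 statements merged into one kernel-verified Lean document; each statement's English description precedes it below -/
import Mathlib

section
/- Let f: X → X be a measure-preserving map on a probability space (X, B, μ). For any measurable set U ⊆ X and integers n ≥ 1, q ≥ 0, define A_q(U) = U ∩ ⋂_{i=1}^{q} f^{-i}(X \ U) and W_{0,n}(B) = ⋂_{i=0}^{n-1} f^{-i}(X \ B). Then |μ(W_{0,n}(U)) − μ(W_{0,n}(A_q(U)))| ≤ q · μ(U \ A_q(U)). -/
/-!
If a point's first `n` iterates avoid `A_q(U)` but not `U`, look at its last visit `i < n` to `U`.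
That visit lies in `U \ A_q(U)`, so the orbit returns to `U` within `q` further steps; by maximality
of `i` this return happens at time `≥ n`, hence `i ≥ n - q`. The difference set is thus covered by
at most `q` preimages of `U \ A_q(U)`, each of measure `μ (U \ A_q(U))` by invariance.
-/

open MeasureTheory Finset

theorem Nat.exists_last_lt_of_lt {P : ℕ → Prop} {n i₀ : ℕ} (hi₀ : i₀ < n) (hP : P i₀) :
    ∃ i, P i ∧ i < n ∧ ∀ k, i < k → k < n → ¬P k := by
  classical
  exact ⟨_, Nat.findGreatest_spec (Nat.le_sub_one_of_lt hi₀) hP,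
    (Nat.findGreatest_le (n - 1)).trans_lt (by omega),
    fun k hk hkn => Nat.findGreatest_is_greatest hk (by omega)⟩

section

variable {X : Type*} (f : X → X)

-- `avoidSet f n B` is the paper's `W_{0,n}(B)` and `noReturnSet f q U` is `A_q(U)`.
def avoidSet (n : ℕ) (B : Set X) : Set X := ⋂ i ∈ range n, f^[i] ⁻¹' Bᶜ

def noReturnSet (q : ℕ) (U : Set X) : Set X := U ∩ ⋂ i ∈ Icc 1 q, f^[i] ⁻¹' Uᶜ

variable {f}

theorem mem_avoidSet {n : ℕ} {B : Set X} {x : X} :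
    x ∈ avoidSet f n B ↔ ∀ i < n, f^[i] x ∉ B := by
  simp [avoidSet]

theorem avoidSet_anti {n : ℕ} {B C : Set X} (h : B ⊆ C) : avoidSet f n C ⊆ avoidSet f n B :=
  fun _ hx => mem_avoidSet.2 fun i hi hB => mem_avoidSet.1 hx i hi (h hB)

theorem noReturnSet_subset (q : ℕ) (U : Set X) : noReturnSet f q U ⊆ U :=
  Set.inter_subset_left

theorem exists_iterate_mem_of_notMem_noReturnSet {q : ℕ} {U : Set X} {x : X} (hx : x ∈ U)
    (hxA : x ∉ noReturnSet f q U) : ∃ j, 1 ≤ j ∧ j ≤ q ∧ f^[j] x ∈ U := by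
  simpa [noReturnSet, hx] using hxA

theorem avoidSet_noReturnSet_sdiff_subset (n q : ℕ) (U : Set X) :
    avoidSet f n (noReturnSet f q U) \ avoidSet f n U ⊆
      ⋃ i ∈ Ico (n - q) n, f^[i] ⁻¹' (U \ noReturnSet f q U) := by
  rintro x ⟨hxA, hxU⟩
  rw [mem_avoidSet] at hxA hxU
  push Not at hxU
  obtain ⟨i₀, hi₀, hi₀U⟩ := hxU
  obtain ⟨i, hiU, hin, hlast⟩ := Nat.exists_last_lt_of_lt (P := fun k => f^[k] x ∈ U) hi₀ hi₀U
  have hiA := hxA i hin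
  obtain ⟨j, hj, hjq, hjU⟩ := exists_iterate_mem_of_notMem_noReturnSet hiU hiA
  rw [← Function.iterate_add_apply] at hjU
  have hnj : n ≤ j + i := by
    by_contra h
    exact hlast (j + i) (by omega) (by omega) hjU
  exact Set.mem_biUnion (mem_Ico.2 ⟨by omega, hin⟩) ⟨hiU, hiA⟩

variable [MeasurableSpace X] {μ : Measure X}

theorem measurableSet_avoidSet (hf : Measurable f) (n : ℕ) {B : Set X}
    (hB : MeasurableSet B) : MeasurableSet (avoidSet f n B) :=
  .biInter (range n).countable_toSet fun i _ => hf.iterate i hB.compl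

theorem measurableSet_noReturnSet (hf : Measurable f) (q : ℕ) {U : Set X}
    (hU : MeasurableSet U) : MeasurableSet (noReturnSet f q U) :=
  hU.inter <| .biInter (Icc 1 q).countable_toSet fun i _ => hf.iterate i hU.compl

theorem MeasureTheory.MeasurePreserving.measureReal_biUnion_preimage_iterate_le
    (hf : MeasurePreserving f μ μ) {E : Set X} (hE : NullMeasurableSet E μ)
    (s : Finset ℕ) : μ.real (⋃ i ∈ s, f^[i] ⁻¹' E) ≤ #s * μ.real E :=
  calc μ.real (⋃ i ∈ s, f^[i] ⁻¹' E) ≤ ∑ i ∈ s, μ.real (f^[i] ⁻¹' E) :=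
        measureReal_biUnion_finset_le _ _
    _ = #s * μ.real E := by
        simp only [(hf.iterate _).measureReal_preimage hE, sum_const, nsmul_eq_mul]

theorem measureReal_avoidSet_noReturnSet_sdiff_le [IsFiniteMeasure μ]
    (hf : MeasurePreserving f μ μ) {U : Set X} (hU : MeasurableSet U) (n q : ℕ) :
    μ.real (avoidSet f n (noReturnSet f q U) \ avoidSet f n U) ≤
      q * μ.real (U \ noReturnSet f q U) := by
  have hE := (hU.diff (measurableSet_noReturnSet hf.measurable q hU)).nullMeasurableSet (μ := μ)
  calc _ ≤ μ.real (⋃ i ∈ Ico (n - q) n, f^[i] ⁻¹' (U \ noReturnSet f q U)) :=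
        measureReal_mono (avoidSet_noReturnSet_sdiff_subset n q U) (measure_ne_top _ _)
    _ ≤ #(Ico (n - q) n) * μ.real (U \ noReturnSet f q U) :=
        hf.measureReal_biUnion_preimage_iterate_le hE _
    _ ≤ q * μ.real (U \ noReturnSet f q U) := by
        gcongr
        rw [Nat.card_Ico]
        omega

end

theorem stmt0_general
    {X : Type*} [MeasurableSpace X] (μ : Measure X) [IsProbabilityMeasure μ]
    (f : X → X) (hf : MeasurePreserving f μ μ)
    (U : Set X) (hU : MeasurableSet U) (n q : ℕ)
    (A : Set X) (hA : A = U ∩ ⋂ i ∈ Finset.Icc 1 q, (f^[i]) ⁻¹' Uᶜ)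
    (W : ℕ → Set X → Set X)
    (hW : ∀ m (B : Set X), W m B = ⋂ i ∈ Finset.range m, (f^[i]) ⁻¹' Bᶜ) :
    |(μ (W n U)).toReal - (μ (W n A)).toReal| ≤ q * (μ (U \ A)).toReal := by
  obtain rfl : A = noReturnSet f q U := hA
  obtain rfl : W = avoidSet f := funext₂ hW
  have hsub : avoidSet f n U ⊆ avoidSet f n (noReturnSet f q U) :=
    avoidSet_anti (noReturnSet_subset q U)
  change |μ.real _ - μ.real _| ≤ q * μ.real _
  rw [abs_sub_comm, ← measureReal_sdiff hsub (measurableSet_avoidSet hf.measurable n hU),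
    abs_of_nonneg measureReal_nonneg]
  exact measureReal_avoidSet_noReturnSet_sdiff_le hf hU n q

theorem stmt0
    {X : Type*} [MeasurableSpace X] (μ : Measure X) [IsProbabilityMeasure μ]
    (f : X → X) (hf : MeasurePreserving f μ μ)
    (U : Set X) (hU : MeasurableSet U) (n q : ℕ) (hn : 1 ≤ n)
    (A : Set X) (hA : A = U ∩ ⋂ i ∈ Finset.Icc 1 q, (f^[i]) ⁻¹' Uᶜ)
    (W : ℕ → Set X → Set X)
    (hW : ∀ m (B : Set X), W m B = ⋂ i ∈ Finset.range m, (f^[i]) ⁻¹' Bᶜ) :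
    |(μ (W n U)).toReal - (μ (W n A)).toReal| ≤ q * (μ (U \ A)).toReal :=
  stmt0_general μ f hf U hU n q A hA W hW
end

section
/- Let z = Σ_{i=1}^{∞} (1/3)^{3^i} and, for the doubling-type map f(x) = 3x mod 1 on the circle, let ξ_j = f^{3^j}(z) for j ≥ 1. Then for every j ≥ 1, (1/3)^{2·3^j} ≤ ξ_j ≤ (1/3)^{2·3^j} + (9/8)·(1/3)^{8·3^j}. -/
/-!
Multiplying `z = ∑_{i ≥ 1} 3^{-3^i}` by `3^{3^j}` turns the terms with `i ≤ j` into integers, and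
the remaining terms `∑_{i > j} 3^{3^j - 3^i}` add up to a number in `[0, 1)`; that number is
`ξ_j = fract (3^{3^j} z)`. Its first term is `3^{-2·3^j}`, and the exponents of the later terms are
at least `8·3^j + 2i`, so they are dominated by a geometric series of ratio `1/9` and sum `9/8`.
-/

open Finset

theorem Int.fract_intCast_mul_fract (m : ℤ) (x : ℝ) :
    Int.fract (m * Int.fract x) = Int.fract (m * x) := by
  rw [← Int.self_sub_floor x, mul_sub, ← Int.cast_mul, Int.fract_sub_intCast]

theorem iterate_fract_intCast_mul (m : ℤ) {n : ℕ} (hn : n ≠ 0) (x : ℝ) :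
    (fun y : ℝ => Int.fract (m * y))^[n] x = Int.fract ((m : ℝ) ^ n * x) := by
  induction n with
  | zero => exact absurd rfl hn
  | succ k ih =>
    rcases eq_or_ne k 0 with rfl | hk
    · simp
    rw [Function.iterate_succ_apply', ih hk, Int.fract_intCast_mul_fract, ← mul_assoc, ← pow_succ']

section PowSeries

variable {q : ℝ} {e : ℕ → ℕ}

theorem summable_pow_of_le (hq₀ : 0 ≤ q) (hq₁ : q < 1) (he : ∀ i, i ≤ e i) :
    Summable fun i => q ^ e i :=
  (summable_geometric_of_lt_one hq₀ hq₁).of_nonneg_of_le (fun _ => by positivity)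
    (fun i => pow_le_pow_of_le_one hq₀ hq₁.le (he i))

theorem pow_le_tsum_pow (hq₀ : 0 ≤ q) (hq₁ : q < 1) (he : ∀ i, i ≤ e i) :
    q ^ e 0 ≤ ∑' i, q ^ e i :=
  (summable_pow_of_le hq₀ hq₁ he).le_tsum 0 fun _ _ => by positivity

theorem tsum_pow_le_add_div (hq₀ : 0 ≤ q) (hq₁ : q < 1) {b : ℕ}
    (he : ∀ i, b + 2 * i ≤ e (i + 1)) :
    ∑' i, q ^ e i ≤ q ^ e 0 + q ^ b / (1 - q ^ 2) := by
  have hsucc : Summable fun i => q ^ e (i + 1) :=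
    summable_pow_of_le hq₀ hq₁ fun i => (show i ≤ b + 2 * i by omega).trans (he i)
  have hgeom : HasSum (fun i : ℕ => q ^ (b + 2 * i)) (q ^ b / (1 - q ^ 2)) := by
    simp only [pow_add, pow_mul, div_eq_mul_inv]
    exact (hasSum_geometric_of_lt_one (by positivity) (pow_lt_one₀ hq₀ hq₁ two_ne_zero)).mul_left _
  rw [((summable_nat_add_iff (f := fun i => q ^ e i) 1).mp hsucc).tsum_eq_zero_add]
  exact add_le_add_right
    (hasSum_le (fun i => pow_le_pow_of_le_one hq₀ hq₁.le (he i)) hsucc.hasSum hgeom) _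

end PowSeries

theorem pow_mul_one_div_pow_of_le {K : Type*} [Field K] {a : K} (ha : a ≠ 0) {m n : ℕ}
    (h : m ≤ n) : a ^ m * (1 / a) ^ n = (1 / a) ^ (n - m) := by
  rw [pow_sub₀ _ (one_div_ne_zero ha) h, one_div_pow, one_div_pow, one_div, one_div, inv_inv,
    mul_comm]

theorem pow_mul_one_div_pow_of_ge {K : Type*} [Field K] {a : K} (ha : a ≠ 0) {m n : ℕ}
    (h : n ≤ m) : a ^ m * (1 / a) ^ n = a ^ (m - n) := by
  rw [pow_sub₀ _ ha h, one_div_pow, one_div]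

theorem le_three_pow_add_sub (i j : ℕ) : i ≤ 3 ^ (i + j + 1) - 3 ^ j := by
  have h₁ : i < 3 ^ i := Nat.lt_pow_self (by norm_num)
  have h₂ : 3 ^ i ≤ 3 ^ (i + j) := Nat.pow_le_pow_right (by norm_num) (by omega)
  have h₃ : 3 ^ j ≤ 3 ^ (i + j) := Nat.pow_le_pow_right (by norm_num) (by omega)
  rw [pow_succ]
  omega

theorem three_pow_zero_add_succ_sub (j : ℕ) : 3 ^ (0 + j + 1) - 3 ^ j = 2 * 3 ^ j := by
  rw [zero_add, pow_succ]
  omega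

theorem le_three_pow_add_two_sub (i j : ℕ) :
    8 * 3 ^ j + 2 * i ≤ 3 ^ (i + 1 + j + 1) - 3 ^ j := by
  have h₁ : i + 1 ≤ 3 ^ i := Nat.lt_pow_self (by norm_num)
  have h₂ : 1 ≤ 3 ^ j := Nat.one_le_pow _ _ (by norm_num)
  have h₃ : 3 ^ (i + 1 + j + 1) = 9 * (3 ^ i * 3 ^ j) := by ring
  have h₄ : i * 3 ^ j + 3 ^ j ≤ 3 ^ i * 3 ^ j := by
    simpa [add_mul] using Nat.mul_le_mul_right (3 ^ j) h₁
  have h₅ : i ≤ i * 3 ^ j := Nat.le_mul_of_pos_right _ h₂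
  omega

/-- `∑_{i > j} 3^{3^j - 3^i}`, reindexed to start at `0`. -/
noncomputable def tailSum (j : ℕ) : ℝ :=
  ∑' i : ℕ, (1 / 3 : ℝ) ^ (3 ^ (i + j + 1) - 3 ^ j)

theorem three_pow_mul_tsum_eq_natCast_add_tailSum (j : ℕ) :
    (3 : ℝ) ^ 3 ^ j * ∑' i : ℕ, (1 / 3 : ℝ) ^ 3 ^ (i + 1) =
      ((∑ i ∈ range j, 3 ^ (3 ^ j - 3 ^ (i + 1)) : ℕ) : ℝ) + tailSum j := by
  have hsum : Summable fun i : ℕ => (1 / 3 : ℝ) ^ 3 ^ (i + 1) :=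
    summable_pow_of_le (by norm_num) (by norm_num) fun i =>
      (Nat.lt_pow_self (by norm_num) : i < 3 ^ i).le.trans
        (Nat.pow_le_pow_right (by norm_num) i.le_succ)
  rw [← tsum_mul_left, ← (hsum.mul_left _).sum_add_tsum_nat_add j, tailSum]
  push_cast
  congr 1
  · refine sum_congr rfl fun i hi => ?_
    exact pow_mul_one_div_pow_of_ge three_ne_zero
      (Nat.pow_le_pow_right (by norm_num) (mem_range.mp hi))
  · refine tsum_congr fun i => ?_
    exact pow_mul_one_div_pow_of_le three_ne_zero (Nat.pow_le_pow_right (by norm_num) (by omega))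

theorem one_third_pow_le_tailSum (j : ℕ) : (1 / 3 : ℝ) ^ (2 * 3 ^ j) ≤ tailSum j := by
  simpa only [tailSum, three_pow_zero_add_succ_sub] using
    pow_le_tsum_pow (by norm_num) (by norm_num) fun i => le_three_pow_add_sub i j

theorem tailSum_le (j : ℕ) :
    tailSum j ≤ (1 / 3 : ℝ) ^ (2 * 3 ^ j) + (9 / 8 : ℝ) * (1 / 3 : ℝ) ^ (8 * 3 ^ j) := by
  have h := tsum_pow_le_add_div (q := 1 / 3) (e := fun i => 3 ^ (i + j + 1) - 3 ^ j)
    (by norm_num) (by norm_num) fun i => le_three_pow_add_two_sub i j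
  rw [three_pow_zero_add_succ_sub] at h
  rw [tailSum]
  convert h using 2
  ring

theorem tailSum_lt_one (j : ℕ) : tailSum j < 1 := by
  have hj : 1 ≤ 3 ^ j := Nat.one_le_pow j 3 three_pos
  have h₂ : (1 / 3 : ℝ) ^ (2 * 3 ^ j) ≤ (1 / 3) ^ 2 :=
    pow_le_pow_of_le_one (by norm_num) (by norm_num) (by omega)
  have h₈ : (1 / 3 : ℝ) ^ (8 * 3 ^ j) ≤ (1 / 3) ^ 2 :=
    pow_le_pow_of_le_one (by norm_num) (by norm_num) (by omega)
  linarith [tailSum_le j]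

theorem fract_three_pow_mul_tsum_eq_tailSum (j : ℕ) :
    Int.fract ((3 : ℝ) ^ 3 ^ j * ∑' i : ℕ, (1 / 3 : ℝ) ^ 3 ^ (i + 1)) = tailSum j := by
  rw [three_pow_mul_tsum_eq_natCast_add_tailSum, Int.fract_natCast_add, Int.fract_eq_self]
  exact ⟨(pow_nonneg (by norm_num) _).trans (one_third_pow_le_tailSum j), tailSum_lt_one j⟩

theorem stmt2
    (f : ℝ → ℝ) (hf : ∀ x, f x = Int.fract (3 * x))
    (z : ℝ) (hz : z = ∑' i : ℕ, (1/3 : ℝ) ^ (3 ^ (i + 1)))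
    (ξ : ℕ → ℝ) (hξ : ∀ j : ℕ, 1 ≤ j → ξ j = f^[3 ^ j] z) :
    ∀ j : ℕ, 1 ≤ j →
      (1/3 : ℝ) ^ (2 * 3 ^ j) ≤ ξ j ∧
      ξ j ≤ (1/3 : ℝ) ^ (2 * 3 ^ j) + (9/8 : ℝ) * (1/3 : ℝ) ^ (8 * 3 ^ j) := by
  intro j hj
  have hf' : f = fun y : ℝ => Int.fract (((3 : ℤ) : ℝ) * y) := funext fun x => by simp [hf]
  have hξj : ξ j = tailSum j := by
    rw [hξ j hj, hf', iterate_fract_intCast_mul 3 (pow_ne_zero j three_ne_zero), Int.cast_ofNat,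
      hz, fract_three_pow_mul_tsum_eq_tailSum]
  rw [hξj]
  exact ⟨one_third_pow_le_tailSum j, tailSum_le j⟩
end

section
/- Let z = Σ_{i=1}^{∞} 3^{-3^i}, ξ_0 = z, ξ_j = Σ_{i>j} 3^{3^j − 3^i}. Then the series Σ_{j=1}^{∞} 3^{3^j − 3^{j+1}} · (ξ_j − ξ_{j+2})/2 converges, and the extremal index of Example 1, θ = 1 − (1/z)·( 3^{-3}·(ξ_1 − ξ_2)/2 + Σ_{j=1}^{∞} 3^{3^j − 3^{j+1}} · (ξ_j − ξ_{j+2})/2 ), satisfies 0 < θ < 1. -/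
/-!
The first term of `ξ j` is `3^(-2·3^j)` and the later ones decay geometrically, so
`3^(-2·3^j) ≤ ξ j ≤ (3/2)·3^(-2·3^j)`. Hence `ξ` is strictly decreasing, which makes every term
of the bracket positive, and the `k`-th term of the series is at most `3^(-4·3^(k+1))`. The
bracket therefore lies strictly between `0` and `3^(-9) + (3/2)·3^(-12) < 3^(-3) ≤ z`.
-/

lemma summable_and_tsum_le_of_le_geometric {f : ℕ → ℝ} {c r : ℝ} (hr0 : 0 ≤ r) (hr1 : r < 1)
    (hf0 : ∀ k, 0 ≤ f k) (hf : ∀ k, f k ≤ c * r ^ k) :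
    Summable f ∧ ∑' k, f k ≤ c * (1 - r)⁻¹ := by
  have hg : Summable fun k => c * r ^ k := (summable_geometric_of_lt_one hr0 hr1).mul_left c
  have hsum : Summable f := .of_nonneg_of_le hf0 hf hg
  refine ⟨hsum, ?_⟩
  calc ∑' k, f k ≤ ∑' k, c * r ^ k := hsum.tsum_le_tsum hf hg
    _ = c * (1 - r)⁻¹ := by rw [tsum_mul_left, tsum_geometric_of_lt_one hr0 hr1]

lemma two_mul_three_pow_add_le (j k : ℕ) : 2 * 3 ^ j + k ≤ 3 ^ (j + k + 1) - 3 ^ j := by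
  have hk : k + 1 ≤ 3 ^ k := Nat.lt_pow_self (by norm_num)
  have hj : 1 ≤ 3 ^ j := Nat.one_le_pow _ _ (by norm_num)
  have hsplit : 3 ^ (j + k + 1) = 3 * 3 ^ j * 3 ^ k := by ring
  rw [hsplit]
  apply Nat.le_sub_of_add_le
  nlinarith [Nat.mul_le_mul_left (3 * 3 ^ j) hk]

-- `ξ_j` of the paper, with the summation index `i > j` written as `i = j + k + 1`.
noncomputable def xi (j : ℕ) : ℝ := ∑' k : ℕ, (1/3 : ℝ) ^ (3 ^ (j + k + 1) - 3 ^ j)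

lemma summable_xi_and_xi_le (j : ℕ) :
    Summable (fun k : ℕ => (1/3 : ℝ) ^ (3 ^ (j + k + 1) - 3 ^ j)) ∧
      xi j ≤ (1/3 : ℝ) ^ (2 * 3 ^ j) * (3/2) := by
  rw [show (3/2 : ℝ) = (1 - 1/3)⁻¹ by norm_num]
  exact summable_and_tsum_le_of_le_geometric (by norm_num) (by norm_num) (fun _ => by positivity)
    fun k => by
      rw [← pow_add]
      exact pow_le_pow_of_le_one (by norm_num) (by norm_num) (two_mul_three_pow_add_le j k)

lemma pow_le_xi (j : ℕ) : (1/3 : ℝ) ^ (2 * 3 ^ j) ≤ xi j := by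
  have h := (summable_xi_and_xi_le j).1.le_tsum 0 fun _ _ => by positivity
  have he : 3 ^ (j + 0 + 1) - 3 ^ j = 2 * 3 ^ j := by rw [add_zero, pow_succ]; omega
  rwa [he] at h

lemma xi_pos (j : ℕ) : 0 < xi j := (pow_pos (by norm_num) _).trans_le (pow_le_xi j)

lemma strictAnti_xi : StrictAnti xi := by
  refine strictAnti_nat_of_succ_lt fun j => ?_
  have hexp : 2 * 3 ^ j + 1 ≤ 2 * 3 ^ (j + 1) := by
    have := Nat.one_le_pow j 3 (by norm_num); rw [pow_succ]; omega
  calc xi (j + 1) ≤ (1/3 : ℝ) ^ (2 * 3 ^ (j + 1)) * (3/2) :=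
        (summable_xi_and_xi_le (j + 1)).2
    _ ≤ (1/3 : ℝ) ^ (2 * 3 ^ j + 1) * (3/2) :=
        mul_le_mul_of_nonneg_right (pow_le_pow_of_le_one (by norm_num) (by norm_num) hexp)
          (by norm_num)
    _ < (1/3 : ℝ) ^ (2 * 3 ^ j) := by
        rw [pow_succ]; linarith [pow_pos (by norm_num : (0:ℝ) < 1/3) (2 * 3 ^ j)]
    _ ≤ xi j := pow_le_xi j

noncomputable def extremalTerm (k : ℕ) : ℝ :=
  (1/3 : ℝ) ^ (3 ^ (k + 2) - 3 ^ (k + 1)) * (xi (k + 1) - xi (k + 3)) / 2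

lemma extremalTerm_nonneg (k : ℕ) : 0 ≤ extremalTerm k := by
  have := strictAnti_xi (by omega : k + 1 < k + 3)
  unfold extremalTerm; positivity

lemma extremalTerm_le (k : ℕ) : extremalTerm k ≤ (1/3 : ℝ) ^ 12 * (1/3 : ℝ) ^ k := by
  set a := (1/3 : ℝ) ^ (2 * 3 ^ (k + 1))
  have hexp : 3 ^ (k + 2) - 3 ^ (k + 1) = 2 * 3 ^ (k + 1) := by rw [pow_succ _ (k + 1)]; omega
  have hxi : xi (k + 1) ≤ a * (3/2) := (summable_xi_and_xi_le (k + 1)).2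
  have hk : 12 + k ≤ 2 * 3 ^ (k + 1) + 2 * 3 ^ (k + 1) := by
    have : k + 1 ≤ 3 ^ k := Nat.lt_pow_self (by norm_num); rw [pow_succ]; omega
  calc extremalTerm k ≤ a * (a * (3/2)) / 2 := by
        unfold extremalTerm; rw [hexp]; gcongr; linarith [xi_pos (k + 3)]
    _ ≤ a * a := by nlinarith [pow_pos (by norm_num : (0:ℝ) < 1/3) (2 * 3 ^ (k + 1))]
    _ ≤ (1/3 : ℝ) ^ (12 + k) := by
        rw [← pow_add]; exact pow_le_pow_of_le_one (by norm_num) (by norm_num) hk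
    _ = (1/3 : ℝ) ^ 12 * (1/3 : ℝ) ^ k := pow_add _ _ _

lemma summable_extremalTerm_and_tsum_le :
    Summable extremalTerm ∧ ∑' k, extremalTerm k ≤ (1/3 : ℝ) ^ 12 * (3/2) := by
  rw [show (3/2 : ℝ) = (1 - 1/3)⁻¹ by norm_num]
  exact summable_and_tsum_le_of_le_geometric (by norm_num) (by norm_num) extremalTerm_nonneg
    extremalTerm_le

lemma pow_le_tsum_one_third_pow_three_pow :
    (1/3 : ℝ) ^ 3 ≤ ∑' i : ℕ, (1/3 : ℝ) ^ (3 ^ (i + 1)) := by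
  have hinj : Function.Injective fun i : ℕ => 3 ^ (i + 1) :=
    (Nat.pow_right_injective (by norm_num : 2 ≤ 3)).comp (add_left_injective 1)
  have hgeom : Summable fun n : ℕ => (1/3 : ℝ) ^ n :=
    summable_geometric_of_lt_one (by norm_num) (by norm_num)
  simpa using (hgeom.comp_injective hinj).le_tsum 0 fun _ _ => pow_nonneg (by norm_num) _

lemma bracket_pos_and_lt :
    0 < (1/3 : ℝ) ^ 3 * (xi 1 - xi 2) / 2 + ∑' k, extremalTerm k ∧
      (1/3 : ℝ) ^ 3 * (xi 1 - xi 2) / 2 + ∑' k, extremalTerm k < (1/3 : ℝ) ^ 3 := by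
  have h12 : xi 2 < xi 1 := strictAnti_xi one_lt_two
  have hxi1 : xi 1 ≤ (1/3 : ℝ) ^ (2 * 3 ^ 1) * (3/2) := (summable_xi_and_xi_le 1).2
  have hS := summable_extremalTerm_and_tsum_le.2
  have hS0 : 0 ≤ ∑' k, extremalTerm k := tsum_nonneg extremalTerm_nonneg
  norm_num at hxi1 hS ⊢
  constructor <;> nlinarith [xi_pos 2]

lemma one_sub_one_div_mul_mem_Ioo {z a : ℝ} (ha : 0 < a) (haz : a < z) :
    0 < 1 - 1 / z * a ∧ 1 - 1 / z * a < 1 := by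
  have hz : 0 < z := ha.trans haz
  rw [one_div_mul_eq_div]
  exact ⟨sub_pos.2 ((div_lt_one hz).2 haz), sub_lt_self _ (div_pos ha hz)⟩

theorem stmt11_general
    (z : ℝ) (hz : z = ∑' i : ℕ, (1/3 : ℝ) ^ (3 ^ (i + 1)))
    (ξ : ℕ → ℝ)
    (hξ : ∀ j : ℕ, 1 ≤ j → ξ j = ∑' k : ℕ, (1/3 : ℝ) ^ (3 ^ (j + k + 1) - 3 ^ j)) :
    Summable (fun k : ℕ =>
      (1/3 : ℝ) ^ (3 ^ (k + 2) - 3 ^ (k + 1)) * (ξ (k + 1) - ξ (k + 3)) / 2) ∧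
    ∀ θ : ℝ,
      θ = 1 - (1 / z) * ((1/3 : ℝ) ^ 3 * (ξ 1 - ξ 2) / 2 +
        ∑' k : ℕ,
          (1/3 : ℝ) ^ (3 ^ (k + 2) - 3 ^ (k + 1)) * (ξ (k + 1) - ξ (k + 3)) / 2) →
      0 < θ ∧ θ < 1 := by
  have hξxi : ∀ j, 1 ≤ j → ξ j = xi j := hξ
  have hterm : (fun k : ℕ =>
      (1/3 : ℝ) ^ (3 ^ (k + 2) - 3 ^ (k + 1)) * (ξ (k + 1) - ξ (k + 3)) / 2) = extremalTerm := by
    funext k; rw [hξxi (k + 1) (by omega), hξxi (k + 3) (by omega)]; rfl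
  rw [hterm, hξxi 1 le_rfl, hξxi 2 one_le_two]
  refine ⟨summable_extremalTerm_and_tsum_le.1, fun θ hθ => hθ ▸ ?_⟩
  obtain ⟨hpos, hlt⟩ := bracket_pos_and_lt
  exact one_sub_one_div_mul_mem_Ioo hpos (hlt.trans_le (hz ▸ pow_le_tsum_one_third_pow_three_pow))

theorem stmt11
    (z : ℝ) (hz : z = ∑' i : ℕ, (1/3 : ℝ) ^ (3 ^ (i + 1)))
    (ξ : ℕ → ℝ) (hξ0 : ξ 0 = z)
    (hξ : ∀ j : ℕ, 1 ≤ j → ξ j = ∑' k : ℕ, (1/3 : ℝ) ^ (3 ^ (j + k + 1) - 3 ^ j)) :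
    Summable (fun k : ℕ =>
      (1/3 : ℝ) ^ (3 ^ (k + 2) - 3 ^ (k + 1)) * (ξ (k + 1) - ξ (k + 3)) / 2) ∧
    ∀ θ : ℝ,
      θ = 1 - (1 / z) * ((1/3 : ℝ) ^ 3 * (ξ 1 - ξ 2) / 2 +
        ∑' k : ℕ,
          (1/3 : ℝ) ^ (3 ^ (k + 2) - 3 ^ (k + 1)) * (ξ (k + 1) - ξ (k + 3)) / 2) →
      0 < θ ∧ θ < 1 :=
  stmt11_general z hz ξ hξ
end

section
/- Let ξ_j = Σ_{i>j} 3^{3^j − 3^i} and suppose ξ_{N+1} + ε < ξ_N for some N ≥ 1 and ε > 0. Then 3^N (ξ_{N+1} + ε) < ξ_{N-1}. -/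
/-! The series defining `ξ j` is lacunary: its exponents grow at least as fast as
`2 * 3 ^ j + k`, so it lies between its first term `3 ^ (-2 * 3 ^ j)` and `3 / 2` times that
term. Hence `3 ^ N * ξ N ≤ 3 ^ (N + 1) / 2 * 3 ^ (-6 * 3 ^ (N - 1))`, which is far below the
first term `3 ^ (-2 * 3 ^ (N - 1))` of `ξ (N - 1)`. -/

section LacunaryPowerSeries

variable {r : ℝ} {f : ℕ → ℕ}

lemma summable_pow_of_le_s15 (hr0 : 0 ≤ r) (hr1 : r < 1) (hf : ∀ k, k ≤ f k) :
    Summable fun k => r ^ f k :=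
  (summable_geometric_of_lt_one hr0 hr1).of_nonneg_of_le (fun _ => pow_nonneg hr0 _)
    fun k => pow_le_pow_of_le_one hr0 hr1.le (hf k)

lemma pow_le_tsum_pow_s15 (hr0 : 0 ≤ r) (hr1 : r < 1) (hf : ∀ k, k ≤ f k) (k : ℕ) :
    r ^ f k ≤ ∑' k, r ^ f k :=
  (summable_pow_of_le_s15 hr0 hr1 hf).le_tsum k fun _ _ => pow_nonneg hr0 _

lemma tsum_pow_le_of_add_le (hr0 : 0 ≤ r) (hr1 : r < 1) {m : ℕ} (hf : ∀ k, m + k ≤ f k) :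
    ∑' k, r ^ f k ≤ r ^ m / (1 - r) := by
  calc ∑' k, r ^ f k
      ≤ ∑' k, r ^ m * r ^ k :=
        (summable_pow_of_le_s15 hr0 hr1 fun k => le_add_self.trans (hf k)).tsum_le_tsum
          (fun k => pow_add r m k ▸ pow_le_pow_of_le_one hr0 hr1.le (hf k))
          ((summable_geometric_of_lt_one hr0 hr1).mul_left _)
    _ = r ^ m / (1 - r) := by
        rw [tsum_mul_left, tsum_geometric_of_lt_one hr0 hr1, div_eq_mul_inv]

end LacunaryPowerSeries

lemma three_pow_succ_mul_le (M : ℕ) :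
    (3 : ℝ) ^ (M + 1) * ((1 / 3) ^ (2 * 3 ^ (M + 1)) / (1 - 1 / 3)) ≤
      (1 / 3) ^ (2 * 3 ^ M + 1) := by
  obtain ⟨d, hd⟩ : ∃ d, 2 * 3 ^ (M + 1) = (2 * 3 ^ M + 1) + (M + 2) + d := by
    have : M < 3 ^ M := Nat.lt_pow_self (by norm_num)
    exact ⟨2 * 3 ^ (M + 1) - (2 * 3 ^ M + 1) - (M + 2), by rw [pow_succ]; omega⟩
  have hcancel : (3 : ℝ) ^ (M + 1) * (1 / 3) ^ (M + 2) = 1 / 3 := by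
    rw [pow_succ (1 / 3 : ℝ) (M + 1), ← mul_assoc, ← mul_pow]; norm_num
  have hd_le : (1 / 3 : ℝ) ^ d ≤ 1 := pow_le_one₀ (by norm_num) (by norm_num)
  have hpos : (0 : ℝ) < (1 / 3) ^ (2 * 3 ^ M + 1) := by positivity
  rw [hd, pow_add (1 / 3 : ℝ), pow_add (1 / 3 : ℝ)]
  calc _ = (1 / 3 : ℝ) ^ (2 * 3 ^ M + 1) *
          ((3 ^ (M + 1) * (1 / 3) ^ (M + 2)) * (1 / 3) ^ d * (3 / 2)) := by
        ring
    _ ≤ (1 / 3) ^ (2 * 3 ^ M + 1) := by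
        rw [hcancel]
        nlinarith

theorem stmt15_general
    (z : ℝ) (hz : z = ∑' i : ℕ, (1/3 : ℝ) ^ (3 ^ (i + 1)))
    (ξ : ℕ → ℝ) (hξ0 : ξ 0 = z)
    (hξ : ∀ j : ℕ, 1 ≤ j → ξ j = ∑' k : ℕ, (1/3 : ℝ) ^ (3 ^ (j + k + 1) - 3 ^ j))
    (N : ℕ) (hN : 1 ≤ N) (ε : ℝ)
    (h : ξ (N + 1) + ε < ξ N) :
    (3 : ℝ) ^ N * (ξ (N + 1) + ε) < ξ (N - 1) := by
  obtain ⟨M, rfl⟩ := Nat.exists_eq_add_of_le' hN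
  have hupper : ξ (M + 1) ≤ (1 / 3) ^ (2 * 3 ^ (M + 1)) / (1 - 1 / 3) := by
    rw [hξ _ le_add_self]
    exact tsum_pow_le_of_add_le (by norm_num) (by norm_num) (two_mul_three_pow_add_le _)
  -- The extra factor `1 / 3` is needed only for `ξ 0 = z`, whose first term is `(1 / 3) ^ 3`.
  have hlower : (1 / 3 : ℝ) ^ (2 * 3 ^ M + 1) ≤ ξ M := by
    rcases M.eq_zero_or_pos with rfl | hM
    · rw [hξ0, hz]
      have hexp (k : ℕ) : k ≤ 3 ^ (k + 1) :=
        (Nat.lt_pow_self (by norm_num)).le.trans (Nat.pow_le_pow_right (by norm_num) k.le_succ)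
      exact pow_le_tsum_pow_s15 (f := fun i => 3 ^ (i + 1)) (by norm_num) (by norm_num) hexp 0
    · have hfirst := pow_le_tsum_pow_s15 (f := fun k => 3 ^ (M + k + 1) - 3 ^ M) (r := 1 / 3)
        (by norm_num) (by norm_num) (fun k => le_add_self.trans (two_mul_three_pow_add_le M k)) 0
      rw [← hξ M hM, show 3 ^ (M + 0 + 1) - 3 ^ M = 2 * 3 ^ M by rw [pow_succ]; omega]
        at hfirst
      exact (pow_le_pow_of_le_one (by norm_num) (by norm_num) (2 * 3 ^ M).le_succ).trans hfirst
  calc (3 : ℝ) ^ (M + 1) * (ξ (M + 1 + 1) + ε) < 3 ^ (M + 1) * ξ (M + 1) := by gcongr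
    _ ≤ 3 ^ (M + 1) * ((1 / 3) ^ (2 * 3 ^ (M + 1)) / (1 - 1 / 3)) := by gcongr
    _ ≤ (1 / 3) ^ (2 * 3 ^ M + 1) := three_pow_succ_mul_le M
    _ ≤ ξ (M + 1 - 1) := hlower

theorem stmt15
    (z : ℝ) (hz : z = ∑' i : ℕ, (1/3 : ℝ) ^ (3 ^ (i + 1)))
    (ξ : ℕ → ℝ) (hξ0 : ξ 0 = z)
    (hξ : ∀ j : ℕ, 1 ≤ j → ξ j = ∑' k : ℕ, (1/3 : ℝ) ^ (3 ^ (j + k + 1) - 3 ^ j))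
    (N : ℕ) (hN : 1 ≤ N) (ε : ℝ) (hε : 0 < ε)
    (h : ξ (N + 1) + ε < ξ N) :
    (3 : ℝ) ^ N * (ξ (N + 1) + ε) < ξ (N - 1) :=
  stmt15_general z hz ξ hξ0 hξ N hN ε h
end
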